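/- arXiv:0709.2099 — 2 statements merged into one kernel-verified Lean document; each statement's English description precedes it below -/
import Mathlib

section
/- Let P be a simple d-polytope in E^d (d ≥ 2) with m facets, and let p_0, p_1, …, p_{d−1} be the polynomials from the explicit representation of P (p_i(x) = σ_{m−d+i+1}(q_1(x),…,q_m(x)) for 1 ≤ i ≤ d−1, and p_0(x) = 1 − Σ_{v ∈ vert(P)} y_v ((1/d) Σ_{j : q_j(v)=0}(1 − q_j(x))^{2k})^{2k} with suitable k ∈ ℕ and y_v > 0, such that P = {x : p_i(x) ≥ 0 for all i}). Then the interior of P satisfies int(P) = {x ∈ E^d : p_i(x) > 0 for all 0 ≤ i ≤ d−1}. -/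
/-
All `q_j` are positive at interior points, so there the inequalities `p_i ≥ 0`, `i ≥ 1`, are
strict. Write `p_0 = 1 - T`. For `k ≥ 1`, `T` is convex, and strictly convex along every segment
on which `q_j` is non-constant for some facet `j` through a vertex. If `T(x) = 1` at an interior
point `x`, push `x` slightly away from a vertex `v` to `x'`: then `x` lies strictly inside the
segment `[v, x']`, along which the `q_j` of the facets through `v` go from `0` to positive values,
so `T(x) < max(T(v), T(x')) ≤ 1`. For `k = 0`, `p_0` is constant, so `P` would be cut out by the
inequalities `p_i ≥ 0`, `i ≥ 1`, alone; but these hold on a whole line through a vertex along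
which `d - 1` of its facet functions vanish, contradicting boundedness.
-/

noncomputable section

open Metric Set Finset Matrix
open scoped RealInnerProductSpace BigOperators Classical

namespace AverkovHenk

abbrev E (d : ℕ) := EuclideanSpace ℝ (Fin d)

/-- Support function `h(P,u)` of `P` in direction `u`. -/
def supp {d : ℕ} (P : Set (E d)) (u : E d) : ℝ :=
  sSup ((fun x => ⟪u, x⟫) '' P)

/-- The normalized affine function `q_F` of the facet with outward unit normal `u`. -/
def qf {d : ℕ} (P : Set (E d)) (u : E d) (x : E d) : ℝ :=
  (supp P u - ⟪u, x⟫) / Metric.diam P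

/-- The exposed face of `P` in direction `u`. -/
def faceOf {d : ℕ} (P : Set (E d)) (u : E d) : Set (E d) :=
  {x ∈ P | ⟪u, x⟫ = supp P u}

/-- `u` is an outward unit normal of a facet (a `(d-1)`-dimensional face) of `P`. -/
def IsFacetNormal {d : ℕ} (P : Set (E d)) (u : E d) : Prop :=
  ‖u‖ = 1 ∧ Module.finrank ℝ ↥(vectorSpan ℝ (faceOf P u)) = d - 1

/-- The vertices of `P`, i.e. its extreme points. -/
def vertices {d : ℕ} (P : Set (E d)) : Set (E d) := Set.extremePoints ℝ P

/-- The `l`-th elementary symmetric function of `y_1, …, y_m`. -/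
def esymm {m : ℕ} (y : Fin m → ℝ) (l : ℕ) : ℝ :=
  ∑ J ∈ Finset.powersetCard l (Finset.univ : Finset (Fin m)), ∏ j ∈ J, y j

/-- A presentation of a convex `d`-polytope `P ⊆ E^d` by the `m` outward unit normals
`u 0, …, u (m-1)` of its facets, together with the induced representation
`P = {x | q_j(x) ≥ 0 for all j}`. -/
structure FacetRep (d m : ℕ) where
  P : Set (E d)
  u : Fin m → E d
  convex : Convex ℝ P
  compact : IsCompact P
  fulldim : (interior P).Nonempty
  inj : Function.Injective u
  facet : ∀ j, IsFacetNormal P (u j)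
  complete : ∀ w : E d, IsFacetNormal P w → ∃ j, w = u j
  rep : P = {x | ∀ j, 0 ≤ qf P (u j) x}

namespace FacetRep

variable {d m : ℕ}

/-- The vector `q(x) = (q_1(x), …, q_m(x))`. -/
def q (R : FacetRep d m) (x : E d) : Fin m → ℝ := fun j => qf R.P (R.u j) x

/-- The indices of the facets containing the point `v`. -/
def act (R : FacetRep d m) (v : E d) : Finset (Fin m) :=
  Finset.univ.filter fun j => R.q v j = 0

/-- The polytope is simple: each vertex lies on exactly `d` facets. -/
def Simple (R : FacetRep d m) : Prop :=
  ∀ v ∈ vertices R.P, (R.act v).card = d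

/-- The enlarged polytope `P_ε`. -/
def Peps (R : FacetRep d m) (ε : ℝ) : Set (E d) := {x | ∀ j, -ε ≤ R.q x j}

/-- The box `Π_{v,ε} = {x : |q_v(x)|_∞ ≤ ε}`. -/
def Piv (R : FacetRep d m) (v : E d) (ε : ℝ) : Set (E d) :=
  {x | ∀ j ∈ R.act v, |R.q x j| ≤ ε}

/-- The cone `C_v = {x : -σ_1(q_v(x)) ≥ (2/3)|q_v(x)|}` (Euclidean norm). -/
def Cv (R : FacetRep d m) (v : E d) : Set (E d) :=
  {x | (2/3) * Real.sqrt (∑ j ∈ R.act v, (R.q x j)^2) ≤ -(∑ j ∈ R.act v, R.q x j)}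

/-- The polytope `P^v_{ε,δ}`. -/
def Pv (R : FacetRep d m) (v : E d) (ε δ : ℝ) : Set (E d) :=
  {x | (∀ j ∈ R.act v, -ε ≤ R.q x j) ∧ ∀ j ∉ R.act v, δ ≤ R.q x j}

/-- `γ = max{1 - q_F(v) : F a facet, v a vertex not on F}`. -/
def gam (R : FacetRep d m) : ℝ :=
  sSup {c | ∃ v ∈ vertices R.P, ∃ j, R.q v j ≠ 0 ∧ c = 1 - R.q v j}

/-- The polynomial `f_k` built from weights `y_v` over the vertex set `V`. -/
def fk (R : FacetRep d m) (V : Finset (E d)) (y : ↥V → ℝ) (k : ℕ) (x : E d) : ℝ :=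
  ∑ v : ↥V, y v * ((∑ j ∈ R.act v.1, (1 - R.q x j)^(2*k)) / (R.act v.1).card)^(2*k)

/-- The matrix `A_k` indexed by the vertex set `V`. -/
def Ak (R : FacetRep d m) (V : Finset (E d)) (k : ℕ) : Matrix ↥V ↥V ℝ :=
  Matrix.of fun w v : ↥V => ((∑ j ∈ R.act v.1, (1 - R.q w.1 j)^(2*k)) / (R.act v.1).card)^(2*k)

/-- `deg(P)`: the maximal number of facets through a vertex. -/
def degP (R : FacetRep d m) (V : Finset (E d)) : ℕ := V.sup fun v => (R.act v).card

end FacetRep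

/-- `|U_s^{-1}|_2` where `U_s` is the matrix with rows `u_j^T`, `j ∈ s`: the supremum of `‖x‖`
over the set where the Euclidean norm of `U_s x` is at most `1`. -/
def invNormU {d m : ℕ} (u : Fin m → E d) (s : Finset (Fin m)) : ℝ :=
  sSup {c | ∃ x : E d, Real.sqrt (∑ j ∈ s, (⟪u j, x⟫)^2) ≤ 1 ∧ c = ‖x‖}

/-- `α = max_{v ∈ vert(P)} |U_v^{-1}|_2`. -/
def alpha {d m : ℕ} (R : FacetRep d m) (V : Finset (E d)) : ℝ :=
  sSup {a | ∃ v ∈ V, a = invNormU R.u (R.act v)}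

/-- The normal cone `N(Q,x) = {u : ⟨x,u⟩ = h(Q,u)}`. -/
def normalCone {d : ℕ} (Q : Set (E d)) (x : E d) : Set (E d) :=
  {u | ⟪u, x⟫ = supp Q u}

/-- `S` is an edge (a 1-dimensional face) of `P`. -/
def IsEdgeOf {d : ℕ} (P S : Set (E d)) : Prop :=
  IsExposed ℝ P S ∧ Module.finrank ℝ ↥(vectorSpan ℝ S) = 1

section PowerSums

variable {ι : Type*} (A : Finset ι) {n : ℕ}

lemma sum_pow_convexComb_le (hn : Even n) (t₁ t₂ : ι → ℝ) {a b : ℝ} (ha : 0 ≤ a) (hb : 0 ≤ b)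
    (hab : a + b = 1) :
    ∑ j ∈ A, (a * t₁ j + b * t₂ j) ^ n ≤ a * ∑ j ∈ A, t₁ j ^ n + b * ∑ j ∈ A, t₂ j ^ n := by
  rw [mul_sum, mul_sum, ← sum_add_distrib]
  exact sum_le_sum fun j _ => hn.convexOn_pow.2 trivial trivial ha hb hab

lemma sum_pow_convexComb_lt (hn : Even n) (hn0 : n ≠ 0) {t₁ t₂ : ι → ℝ}
    (h : ∃ j ∈ A, t₁ j ≠ t₂ j) {a b : ℝ} (ha : 0 < a) (hb : 0 < b) (hab : a + b = 1) :
    ∑ j ∈ A, (a * t₁ j + b * t₂ j) ^ n < a * ∑ j ∈ A, t₁ j ^ n + b * ∑ j ∈ A, t₂ j ^ n := by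
  rw [mul_sum, mul_sum, ← sum_add_distrib]
  obtain ⟨j, hj, hne⟩ := h
  exact sum_lt_sum (fun j _ => hn.convexOn_pow.2 trivial trivial ha.le hb.le hab)
    ⟨j, hj, (hn.strictConvexOn_pow hn0).2 trivial trivial hne ha hb hab⟩

lemma sum_pow_div_pow_convexComb_le (hn : Even n) {c : ℝ} (hc : 0 < c) (t₁ t₂ : ι → ℝ)
    {a b : ℝ} (ha : 0 ≤ a) (hb : 0 ≤ b) (hab : a + b = 1) :
    ((∑ j ∈ A, (a * t₁ j + b * t₂ j) ^ n) / c) ^ n ≤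
      a * ((∑ j ∈ A, t₁ j ^ n) / c) ^ n + b * ((∑ j ∈ A, t₂ j ^ n) / c) ^ n := by
  calc ((∑ j ∈ A, (a * t₁ j + b * t₂ j) ^ n) / c) ^ n
      ≤ (a * ((∑ j ∈ A, t₁ j ^ n) / c) + b * ((∑ j ∈ A, t₂ j ^ n) / c)) ^ n := by
        refine pow_le_pow_left₀ (div_nonneg (sum_nonneg fun j _ => hn.pow_nonneg _) hc.le) ?_ n
        rw [mul_div_assoc', mul_div_assoc', ← add_div]
        exact div_le_div_of_nonneg_right (sum_pow_convexComb_le A hn t₁ t₂ ha hb hab) hc.le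
    _ ≤ _ := hn.convexOn_pow.2 trivial trivial ha hb hab

lemma sum_pow_div_pow_convexComb_lt (hn : Even n) (hn0 : n ≠ 0) {c : ℝ} (hc : 0 < c)
    {t₁ t₂ : ι → ℝ} (h : ∃ j ∈ A, t₁ j ≠ t₂ j) {a b : ℝ} (ha : 0 < a) (hb : 0 < b)
    (hab : a + b = 1) :
    ((∑ j ∈ A, (a * t₁ j + b * t₂ j) ^ n) / c) ^ n <
      a * ((∑ j ∈ A, t₁ j ^ n) / c) ^ n + b * ((∑ j ∈ A, t₂ j ^ n) / c) ^ n := by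
  calc ((∑ j ∈ A, (a * t₁ j + b * t₂ j) ^ n) / c) ^ n
      < (a * ((∑ j ∈ A, t₁ j ^ n) / c) + b * ((∑ j ∈ A, t₂ j ^ n) / c)) ^ n := by
        refine pow_lt_pow_left₀ ?_ (div_nonneg (sum_nonneg fun j _ => hn.pow_nonneg _) hc.le) hn0
        rw [mul_div_assoc', mul_div_assoc', ← add_div]
        exact div_lt_div_of_pos_right (sum_pow_convexComb_lt A hn hn0 h ha hb hab) hc
    _ ≤ _ := hn.convexOn_pow.2 trivial trivial ha.le hb.le hab

end PowerSums

section Esymm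

variable {m : ℕ} {y : Fin m → ℝ}

lemma esymm_pos (hy : ∀ j, 0 < y j) {l : ℕ} (hl : l ≤ m) : 0 < esymm y l :=
  sum_pos (fun _ _ => prod_pos fun j _ => hy j) (powersetCard_nonempty.2 (by simpa using hl))

lemma esymm_eq_zero_of_card_lt {J : Finset (Fin m)} (hJ : ∀ j ∈ J, y j = 0) {l : ℕ}
    (hl : m < l + J.card) : esymm y l = 0 := by
  refine sum_eq_zero fun K hK => ?_
  rw [mem_powersetCard] at hK
  obtain ⟨j, hj⟩ := inter_nonempty_of_card_lt_card_add_card hK.1 (subset_univ J)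
    (by simpa [hK.2] using hl)
  exact prod_eq_zero (mem_inter.1 hj).1 (hJ j (mem_inter.1 hj).2)

end Esymm

section Lines

variable {F : Type*} [NormedAddCommGroup F]

open Filter Topology in
lemma exists_add_smul_mem_of_mem_interior [NormedSpace ℝ F] {s : Set F} {x : F}
    (hx : x ∈ interior s) (u : F) : ∃ t : ℝ, 0 < t ∧ x + t • u ∈ s := by
  have hcont : Tendsto (fun t : ℝ => x + t • u) (𝓝[>] 0) (𝓝 x) :=
    ((continuous_const.add (continuous_id.smul continuous_const)).tendsto' 0 x
      (by simp)).mono_left nhdsWithin_le_nhds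
  obtain ⟨t, hts, ht⟩ :=
    ((hcont.eventually (mem_interior_iff_mem_nhds.1 hx)).and self_mem_nhdsWithin).exists
  exact ⟨t, ht, hts⟩

lemma diam_pos_of_nonempty_interior [NormedSpace ℝ F] [Nontrivial F] {s : Set F}
    (hs : Bornology.IsBounded s) (hint : (interior s).Nonempty) : 0 < diam s := by
  obtain ⟨x, hx⟩ := hint
  obtain ⟨u, hu⟩ := exists_ne (0 : F)
  obtain ⟨t, ht, hxt⟩ := exists_add_smul_mem_of_mem_interior hx u
  refine diam_pos ⟨x, interior_subset hx, x + t • u, hxt, ?_⟩ hs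
  simpa [eq_comm (a := x), smul_eq_zero] using And.intro ht.ne' hu

lemma eq_zero_of_forall_add_smul_mem [NormedSpace ℝ F] {s : Set F} (hs : Bornology.IsBounded s)
    {x w : F} (hline : ∀ t : ℝ, x + t • w ∈ s) : w = 0 := by
  by_contra hw
  obtain ⟨C, hC⟩ := isBounded_iff_forall_norm_le.1 hs
  have hwpos : 0 < ‖w‖ := norm_pos_iff.2 hw
  have hx : ‖x‖ ≤ C := hC x (by simpa using hline 0)
  set t := (C + ‖x‖ + 1) / ‖w‖
  have ht : 0 ≤ t := div_nonneg (by linarith [norm_nonneg x]) hwpos.le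
  have hnorm : ‖t • w‖ = C + ‖x‖ + 1 := by
    rw [norm_smul, Real.norm_of_nonneg ht, div_mul_cancel₀ _ hwpos.ne']
  have := norm_sub_le (x + t • w) x
  rw [add_sub_cancel_left, hnorm] at this
  linarith [hC _ (hline t)]

lemma exists_ne_zero_forall_inner_eq_zero [InnerProductSpace ℝ F] [FiniteDimensional ℝ F]
    (S : Finset F) (hS : S.card < Module.finrank ℝ F) : ∃ w ≠ 0, ∀ u ∈ S, ⟪u, w⟫ = 0 := by
  set W := Submodule.span ℝ (S : Set F)
  have hW : W ≠ ⊤ := fun h => by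
    have : Module.finrank ℝ W ≤ S.card := finrank_span_finset_le_card S
    rw [h, finrank_top] at this
    omega
  obtain ⟨w, hwW, hw⟩ := Submodule.exists_mem_ne_zero_of_ne_bot
    (mt Submodule.orthogonal_eq_bot_iff.1 hW)
  exact ⟨w, hw, fun u hu => (Submodule.mem_orthogonal W w).1 hwW u (Submodule.subset_span hu)⟩

end Lines

lemma isOpen_setOf_forall_pos {X : Type*} [TopologicalSpace X] {f : ℕ → X → ℝ}
    (hf : ∀ i, Continuous (f i)) (a b : ℕ) : IsOpen {x | ∀ i, a ≤ i → i ≤ b → 0 < f i x} := by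
  have : {x | ∀ i, a ≤ i → i ≤ b → 0 < f i x} = ⋂ i ∈ Finset.Icc a b, {x | 0 < f i x} := by
    ext x
    simp [and_imp]
  rw [this]
  exact isOpen_biInter_finset fun i _ => isOpen_lt continuous_const (hf i)

lemma inner_lt_supp_of_mem_interior {d : ℕ} {P : Set (E d)} {u x : E d}
    (hP : BddAbove ((fun x => ⟪u, x⟫) '' P)) (hx : x ∈ interior P) (hu : u ≠ 0) :
    ⟪u, x⟫ < supp P u := by
  obtain ⟨t, ht, hxt⟩ := exists_add_smul_mem_of_mem_interior hx u
  calc ⟪u, x⟫ < ⟪u, x⟫ + t * ‖u‖ ^ 2 := lt_add_of_pos_right _ (by positivity)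
    _ = ⟪u, x + t • u⟫ := by rw [inner_add_right, real_inner_smul_right, real_inner_self_eq_norm_sq]
    _ ≤ supp P u := le_csSup hP ⟨_, hxt, rfl⟩

namespace FacetRep

variable {d m : ℕ} (R : FacetRep d m)

@[fun_prop]
lemma continuous_q (j : Fin m) : Continuous fun x => R.q x j :=
  (continuous_const.sub (continuous_const.inner continuous_id)).div_const _

lemma continuous_esymm_q (l : ℕ) : Continuous fun x => esymm (R.q x) l := by
  unfold esymm
  fun_prop

lemma q_convexComb {a b : ℝ} (hab : a + b = 1) (z₁ z₂ : E d) (j : Fin m) :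
    R.q (a • z₁ + b • z₂) j = a * R.q z₁ j + b * R.q z₂ j := by
  simp only [q, qf, inner_add_right, real_inner_smul_right]
  rw [mul_div_assoc', mul_div_assoc', ← add_div]
  congr 1
  linear_combination (- supp R.P (R.u j)) * hab

lemma q_add_smul_of_inner_eq_zero {j : Fin m} {w : E d} (hw : ⟪R.u j, w⟫ = 0) (v : E d) (t : ℝ) :
    R.q (v + t • w) j = R.q v j := by
  simp only [q, qf, inner_add_right, real_inner_smul_right, hw, mul_zero, add_zero]

lemma q_pos_of_mem_interior {x : E d} (hx : x ∈ interior R.P) (j : Fin m) : 0 < R.q x j := by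
  have hu : R.u j ≠ 0 := norm_ne_zero_iff.1 (by simp [(R.facet j).1])
  have : Nontrivial (E d) := nontrivial_of_ne _ _ hu
  refine div_pos (sub_pos.2 (inner_lt_supp_of_mem_interior ?_ hx hu))
    (diam_pos_of_nonempty_interior R.compact.isBounded R.fulldim)
  exact (R.compact.image (continuous_const.inner continuous_id)).bddAbove

lemma q_eq_zero_of_mem_act {v : E d} {j : Fin m} (hj : j ∈ R.act v) : R.q v j = 0 :=
  (mem_filter.1 hj).2

/-- With `d - 1` facet functions vanishing along a line through a vertex, every product of
`m - d + i + 1 > m - (d - 1)` of the `q_j` vanishes on it. -/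
lemma esymm_nonneg_set_not_subset (hd : 0 < d) {v : E d} (hv : d - 1 ≤ (R.act v).card) :
    ¬ {z | ∀ i, 1 ≤ i → i ≤ d - 1 → 0 ≤ esymm (R.q z) (m - d + i + 1)} ⊆ R.P := by
  intro hsub
  obtain ⟨J, hJv, hJ⟩ := exists_subset_card_eq hv
  obtain ⟨w, hw0, hw⟩ := exists_ne_zero_forall_inner_eq_zero (J.image R.u)
    (by simpa using (card_image_le.trans hJ.le).trans_lt (by omega : d - 1 < d))
  refine hw0 (eq_zero_of_forall_add_smul_mem R.compact.isBounded (x := v) fun t => hsub ?_)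
  intro i hi _
  refine (esymm_eq_zero_of_card_lt (J := J) (fun j hj => ?_) (by omega)).symm.le
  rw [R.q_add_smul_of_inner_eq_zero (hw _ (mem_image_of_mem _ hj))]
  exact R.q_eq_zero_of_mem_act (hJv hj)

/-- `1 - p_0`, with the denominator `d` of `p_0` generalized to `c`. -/
def vertexSum (V : Finset (E d)) (y : E d → ℝ) (c : ℝ) (k : ℕ) (x : E d) : ℝ :=
  ∑ v ∈ V, y v * ((∑ j ∈ R.act v, (1 - R.q x j) ^ (2 * k)) / c) ^ (2 * k)

variable {V : Finset (E d)} {y : E d → ℝ} {c : ℝ} {k : ℕ}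

lemma continuous_vertexSum : Continuous (R.vertexSum V y c k) := by
  unfold vertexSum
  fun_prop

lemma vertexSum_convexComb_lt (hy : ∀ v ∈ V, 0 < y v) (hc : 0 < c) (hk : k ≠ 0)
    {z₁ z₂ : E d} (h : ∃ v ∈ V, ∃ j ∈ R.act v, R.q z₁ j ≠ R.q z₂ j)
    {a b : ℝ} (ha : 0 < a) (hb : 0 < b) (hab : a + b = 1) :
    R.vertexSum V y c k (a • z₁ + b • z₂) <
      a * R.vertexSum V y c k z₁ + b * R.vertexSum V y c k z₂ := by
  have hq : ∀ j, 1 - R.q (a • z₁ + b • z₂) j = a * (1 - R.q z₁ j) + b * (1 - R.q z₂ j) := by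
    intro j
    rw [R.q_convexComb hab]
    linear_combination -hab
  have hn : Even (2 * k) := even_two_mul k
  simp only [vertexSum, hq, mul_sum, ← sum_add_distrib]
  obtain ⟨v, hv, j, hj, hne⟩ := h
  refine sum_lt_sum (fun w hw => ?_) ⟨v, hv, ?_⟩
  · calc _ ≤ y w * (a * ((∑ j ∈ R.act w, (1 - R.q z₁ j) ^ (2 * k)) / c) ^ (2 * k) +
          b * ((∑ j ∈ R.act w, (1 - R.q z₂ j) ^ (2 * k)) / c) ^ (2 * k)) :=
          mul_le_mul_of_nonneg_left
            (sum_pow_div_pow_convexComb_le _ hn hc _ _ ha.le hb.le hab) (hy w hw).le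
      _ = _ := by ring
  · calc _ < y v * (a * ((∑ j ∈ R.act v, (1 - R.q z₁ j) ^ (2 * k)) / c) ^ (2 * k) +
          b * ((∑ j ∈ R.act v, (1 - R.q z₂ j) ^ (2 * k)) / c) ^ (2 * k)) :=
          mul_lt_mul_of_pos_left (sum_pow_div_pow_convexComb_lt _ hn (by omega) hc
            ⟨j, hj, by simpa using hne⟩ ha hb hab) (hy v hv)
      _ = _ := by ring

lemma vertexSum_lt_one_of_mem_interior (hy : ∀ v ∈ V, 0 < y v) (hc : 0 < c) (hk : k ≠ 0)
    (hle : ∀ z ∈ R.P, R.vertexSum V y c k z ≤ 1) {v : E d} (hv : v ∈ V) (hvP : v ∈ R.P)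
    (hact : (R.act v).Nonempty) {x : E d} (hx : x ∈ interior R.P) :
    R.vertexSum V y c k x < 1 := by
  obtain ⟨t, ht, hx'⟩ :=
    exists_add_smul_mem_of_mem_interior (by rwa [interior_interior]) (x - v)
  set x' := x + t • (x - v)
  have hx_eq : (1 / (1 + t)) • x' + (t / (1 + t)) • v = x := by
    simp only [x']
    match_scalars
    · field_simp
    · field_simp
      ring
  obtain ⟨j, hj⟩ := hact
  have hne : R.q x' j ≠ R.q v j := by
    rw [R.q_eq_zero_of_mem_act hj]
    exact (R.q_pos_of_mem_interior hx' j).ne'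
  calc R.vertexSum V y c k x
      < 1 / (1 + t) * R.vertexSum V y c k x' + t / (1 + t) * R.vertexSum V y c k v := by
        rw [← hx_eq]
        exact R.vertexSum_convexComb_lt hy hc hk ⟨v, hv, j, hj, hne⟩ (by positivity)
          (by positivity) (by field_simp)
    _ ≤ 1 / (1 + t) * 1 + t / (1 + t) * 1 := by
        gcongr
        exacts [hle x' (interior_subset hx'), hle v hvP]
    _ = 1 := by field_simp

end FacetRep

theorem statement2 (d m : ℕ) (hd : 2 ≤ d) (R : FacetRep d m) (hs : R.Simple)
    (V : Finset (E d)) (hV : (↑V : Set (E d)) = vertices R.P)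
    (k : ℕ) (y : E d → ℝ) (hy : ∀ v ∈ V, 0 < y v)
    (p0 : E d → ℝ)
    (hp0 : p0 = fun x =>
      1 - ∑ v ∈ V, y v * ((∑ j ∈ R.act v, (1 - R.q x j) ^ (2 * k)) / d) ^ (2 * k))
    (hrep : R.P = {x : E d |
        0 ≤ p0 x ∧ ∀ i, 1 ≤ i → i ≤ d - 1 → 0 ≤ esymm (R.q x) (m - d + i + 1)}) :
    interior R.P = {x : E d |
        0 < p0 x ∧ ∀ i, 1 ≤ i → i ≤ d - 1 → 0 < esymm (R.q x) (m - d + i + 1)} := by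
  have hp0' : p0 = fun x => 1 - R.vertexSum V y d k x := hp0
  have hP : ∀ z ∈ R.P, 0 ≤ p0 z := fun z hz => (hrep ▸ hz : z ∈ {x | 0 ≤ p0 x ∧ _}).1
  refine Subset.antisymm (fun x hx => ?_) (interior_maximal ?_ ?_)
  · obtain ⟨v, hvert⟩ := R.compact.extremePoints_nonempty ⟨x, interior_subset hx⟩
    have hv : v ∈ V := by rwa [← mem_coe, hV]
    have hcard : (R.act v).card = d := hs v hvert
    have hdm : d ≤ m := hcard ▸ (card_le_univ _).trans_eq (Fintype.card_fin m)
    refine ⟨?_, fun i _ hi => esymm_pos (R.q_pos_of_mem_interior hx) (by omega)⟩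
    rcases Nat.eq_zero_or_pos k with rfl | hk
    · have hconst : ∀ z, p0 z = p0 x := by simp [hp0]
      refine (hP x (interior_subset hx)).lt_of_ne fun hx0 =>
        R.esymm_nonneg_set_not_subset (v := v) (by omega) (by omega) fun z hz => ?_
      rw [hrep]
      exact ⟨hconst z ▸ hx0.le, hz⟩
    · have hle : ∀ z ∈ R.P, R.vertexSum V y d k z ≤ 1 := fun z hz => by
        linarith [hp0' ▸ hP z hz]
      have := R.vertexSum_lt_one_of_mem_interior hy (by positivity) hk.ne' hle hv
        (extremePoints_subset hvert) (card_pos.1 (by omega)) hx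
      rw [hp0']
      linarith
  · exact fun z hz => hrep ▸ ⟨hz.1.le, fun i h1 h2 => (hz.2 i h1 h2).le⟩
  · rw [hp0']
    exact (isOpen_lt continuous_const (continuous_const.sub R.continuous_vertexSum)).inter
      (isOpen_setOf_forall_pos (fun i => R.continuous_esymm_q _) _ _)
end AverkovHenk
end
end

section
/- Let P be a simple d-polytope in E^d with m facets. Then there exists ε_3 > 0 such that {x ∈ P_{ε_3} : σ_i(q(x)) ≥ 0 for all m−d+2 ≤ i ≤ m} ⊆ P ∪ ⋃_{v ∈ vert(P)} C_v. -/
noncomputable section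

open Metric Set Finset Matrix
open scoped RealInnerProductSpace BigOperators Classical

/-!
Near a point `x₀ ∈ P`, let `S` be the set of facets through `x₀`: on `S` the coordinates of `q` are
small, off `S` they are bounded below, and simplicity gives `|S| ≤ d`. For `l ≤ m - |S|`,
`σₗ(q(x)) ≥ 0` because it has a dominant term made of large coordinates. So if `σₗ(q(x)) ≥ 0` for
`l ≥ m - d + 2` but some `σₗ(q(x))` is negative, then `l = m - d + 1` and `|S| = d`. Splitting
`∏ⱼ (X + qⱼ(x))` into the factors over `S` and off `S` shows that, up to the same positive factor
and errors of higher order in `z = q_S(x)`, `σ_{m-d+1}` and `σ_{m-d+2}` are `σ₁(z)` and `σ₂(z)`.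
Then `σ₁(z) ≲ 0 ≲ σ₂(z)` and `σ₁(z)² = |z|² + 2σ₂(z)` force the cone inequality. If no `σₗ(q(x))`
is negative, `∏ⱼ (X + qⱼ(x))` has no positive root, so `q(x) ≥ 0`. Hence the good set is a
neighbourhood of `P`, and it contains `P_ε` for small `ε` because `P` is compact and `P_ε` lies in
the `O(ε)`-neighbourhood of `P`.
-/

open Polynomial Topology

theorem Multiset.sq_sum_eq_sum_sq_add_two_mul_esymm {R : Type*} [CommRing R] (s : Multiset R) :
    s.sum ^ 2 = (s.map (· ^ 2)).sum + 2 * s.esymm 2 := by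
  induction s using Multiset.induction_on with
  | empty => simp [Multiset.esymm, Multiset.powersetCard_zero_right]
  | cons a s ih =>
    have h : (a ::ₘ s).esymm 2 = s.esymm 2 + a * s.sum := by
      simpa [Multiset.esymm, Multiset.powersetCard_cons, Multiset.powersetCard_one]
        using Multiset.sum_map_mul_left (s := s) (a := a) (f := id)
    rw [h, Multiset.sum_cons, Multiset.map_cons, Multiset.sum_cons]
    linear_combination ih

theorem Multiset.nonneg_of_esymm_nonneg {s : Multiset ℝ} (h : ∀ k ≤ s.card, 0 ≤ s.esymm k) :
    ∀ x ∈ s, 0 ≤ x := by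
  intro x hx
  by_contra! hneg
  have hroot : ((s.map fun r => X + C r).prod).eval (-x) = 0 := by
    rw [eval_multiset_prod]
    exact Multiset.prod_eq_zero (Multiset.mem_map.2 ⟨_, Multiset.mem_map.2 ⟨x, hx, rfl⟩, by simp⟩)
  rw [Multiset.prod_X_add_C_eq_sum_esymm, eval_finsetSum] at hroot
  have hterm : ∀ k ∈ Finset.range (s.card + 1),
      0 ≤ (C (s.esymm k) * X ^ (s.card - k)).eval (-x) := fun k hk => by
    simp only [eval_mul, eval_C, eval_pow, eval_X]
    exact mul_nonneg (h k (by simpa [Nat.lt_succ_iff] using hk)) (pow_nonneg (by linarith) _)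
  have hlead := Finset.single_le_sum hterm (Finset.mem_range.2 (Nat.succ_pos _))
  rw [hroot] at hlead
  simp only [eval_mul, eval_C, eval_pow, eval_X, Multiset.esymm, Multiset.powersetCard_zero_left,
    Multiset.map_singleton, Multiset.prod_zero, Multiset.sum_singleton, one_mul,
    Nat.sub_zero] at hlead
  linarith [pow_pos (neg_pos.2 hneg) s.card]

theorem Finset.abs_sum_powersetCard_prod_le {ι : Type*} (T : Finset ι) (f : ι → ℝ) {c : ℝ}
    (hc : 0 ≤ c) (hf : ∀ j ∈ T, |f j| ≤ c) (n : ℕ) :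
    |∑ J ∈ T.powersetCard n, ∏ j ∈ J, f j| ≤ 2 ^ #T * c ^ n := by
  have hterm : ∀ J ∈ T.powersetCard n, |∏ j ∈ J, f j| ≤ c ^ n := fun J hJ => by
    obtain ⟨hJT, rfl⟩ := Finset.mem_powersetCard.1 hJ
    rw [Finset.abs_prod, ← Finset.prod_const]
    exact Finset.prod_le_prod (fun j _ => abs_nonneg _) fun j hj => hf j (hJT hj)
  calc |∑ J ∈ T.powersetCard n, ∏ j ∈ J, f j|
      ≤ ∑ J ∈ T.powersetCard n, |∏ j ∈ J, f j| := Finset.abs_sum_le_sum_abs _ _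
    _ ≤ #(T.powersetCard n) * c ^ n := by
      simpa using Finset.sum_le_sum hterm
    _ ≤ 2 ^ #T * c ^ n := by
      gcongr
      rw [Finset.card_powersetCard]
      exact_mod_cast Nat.choose_le_two_pow _ _

theorem Polynomial.abs_coeff_prod_X_add_C_le {ι : Type*} (T : Finset ι) (f : ι → ℝ) {c : ℝ}
    (hc : 0 ≤ c) (hf : ∀ j ∈ T, |f j| ≤ c) (a : ℕ) :
    |(∏ j ∈ T, (X + C (f j))).coeff a| ≤ 2 ^ #T * c ^ (#T - a) := by
  rcases le_or_gt a #T with ha | ha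
  · rw [Finset.prod_X_add_C_coeff T f ha]
    exact Finset.abs_sum_powersetCard_prod_le T f hc hf _
  · rw [coeff_eq_zero_of_natDegree_lt, abs_zero]
    · exact mul_nonneg (by positivity) (pow_nonneg hc _)
    rwa [natDegree_prod_of_monic _ _ fun j _ => monic_X_add_C _, Finset.sum_congr rfl
      fun j _ => natDegree_X_add_C (f j), Finset.sum_const, smul_eq_mul, mul_one]

theorem Finset.sum_nonneg_of_neg_le_of_card_mul_le {α : Type*} {F : Finset α} {t : α → ℝ}
    {b c : ℝ} (hc : 0 ≤ c) (ht : ∀ J ∈ F, -c ≤ t J) {J₀ : α} (hJ₀ : J₀ ∈ F) (hb : b ≤ t J₀)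
    (hcb : #F * c ≤ b) : 0 ≤ ∑ J ∈ F, t J := by
  have h := Finset.single_le_sum (f := fun J => t J + c) (fun J hJ => by linarith [ht J hJ]) hJ₀
  rw [Finset.sum_add_distrib, Finset.sum_const, nsmul_eq_mul] at h
  linarith

theorem two_thirds_mul_sqrt_le_neg {σ₁ σ₂ Q c : ℝ} (hc : 0 ≤ c) (hcQ : c ^ 2 ≤ Q)
    (hsq : σ₁ ^ 2 = Q + 2 * σ₂) (h₁ : σ₁ < c / 4) (h₂ : -(c ^ 2 / 4) ≤ σ₂) :
    2 / 3 * √Q ≤ -σ₁ := by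
  have hhalf : Q / 2 ≤ σ₁ ^ 2 := by linarith
  have hσ₁ : σ₁ < 0 := by
    by_contra! h
    nlinarith [mul_le_mul h₁.le h₁.le h (by linarith)]
  have hQ : 0 ≤ Q := (sq_nonneg c).trans hcQ
  rw [← pow_le_pow_iff_left₀ (by positivity) (by linarith) two_ne_zero, mul_pow, Real.sq_sqrt hQ]
  linarith

namespace AverkovHenk

section Perturbation

variable {m d : ℕ} {y : Fin m → ℝ} {S : Finset (Fin m)} {δ η M : ℝ}

theorem esymm_nonneg_of_le_card_compl (hδ : 0 < δ) (hδ1 : δ ≤ 1) (hM : 1 ≤ M) (hη : 0 ≤ η)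
    (hw : ∀ j ∉ S, δ ≤ y j) (hz : ∀ j ∈ S, |y j| ≤ η) (hyM : ∀ j, |y j| ≤ M)
    (hsmall : 2 ^ m * M ^ m * η ≤ δ ^ m) {l : ℕ} (hl : l ≤ m - #S) : 0 ≤ esymm y l := by
  have hlm : l ≤ m := hl.trans (Nat.sub_le _ _)
  have hMη : 0 ≤ M ^ m * η := mul_nonneg (pow_nonneg (zero_le_one.trans hM) m) hη
  obtain ⟨J₀, hJ₀S, hJ₀card⟩ := Finset.exists_subset_card_eq (s := Sᶜ) (n := l)
    (by rwa [Finset.card_compl, Fintype.card_fin])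
  have hsmallTerm : ∀ J ∈ univ.powersetCard l, -(M ^ m * η) ≤ ∏ j ∈ J, y j := by
    intro J hJ
    have hJcard := (Finset.mem_powersetCard.1 hJ).2
    by_cases hJS : Disjoint J S
    · have : 0 ≤ ∏ j ∈ J, y j :=
        Finset.prod_nonneg fun j hj => hδ.le.trans (hw j (Finset.disjoint_left.1 hJS hj))
      linarith
    obtain ⟨j₁, hj₁J, hj₁S⟩ := Finset.not_disjoint_iff.1 hJS
    have hrest : ∏ j ∈ J.erase j₁, |y j| ≤ M ^ m :=
      calc ∏ j ∈ J.erase j₁, |y j| ≤ ∏ _j ∈ J.erase j₁, M :=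
            Finset.prod_le_prod (fun j _ => abs_nonneg _) fun j _ => hyM j
        _ ≤ M ^ m := by
          rw [Finset.prod_const]
          exact pow_le_pow_right₀ hM ((Finset.card_erase_le).trans (hJcard ▸ hlm))
    have habs : |∏ j ∈ J, y j| ≤ M ^ m * η := by
      rw [Finset.abs_prod, ← Finset.mul_prod_erase _ _ hj₁J, mul_comm]
      exact mul_le_mul hrest (hz j₁ hj₁S) (abs_nonneg _) (pow_nonneg (zero_le_one.trans hM) m)
    linarith [neg_abs_le (∏ j ∈ J, y j)]
  have hbigTerm : δ ^ m ≤ ∏ j ∈ J₀, y j :=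
    calc δ ^ m ≤ δ ^ l := pow_le_pow_of_le_one hδ.le hδ1 hlm
      _ = ∏ _j ∈ J₀, δ := by rw [Finset.prod_const, hJ₀card]
      _ ≤ ∏ j ∈ J₀, y j := Finset.prod_le_prod (fun _ _ => hδ.le)
          fun j hj => hw j (Finset.mem_compl.1 (hJ₀S hj))
  refine Finset.sum_nonneg_of_neg_le_of_card_mul_le hMη hsmallTerm
    (Finset.mem_powersetCard.2 ⟨Finset.subset_univ _, hJ₀card⟩) hbigTerm ?_
  calc (#(univ.powersetCard l) : ℝ) * (M ^ m * η) ≤ 2 ^ m * (M ^ m * η) := by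
        gcongr
        rw [Finset.card_powersetCard, Finset.card_univ, Fintype.card_fin]
        exact_mod_cast Nat.choose_le_two_pow _ _
    _ ≤ δ ^ m := by linarith

theorem abs_esymm_sub_le {k : ℕ} {c : ℝ} (hcard : #S = d) (hk : k ≤ d) (hc : 0 ≤ c) (hc1 : c ≤ 1)
    (hz : ∀ j ∈ S, |y j| ≤ c) (hM : 1 ≤ M) (hyM : ∀ j, |y j| ≤ M) :
    |esymm y (m - d + k) - (∑ J ∈ S.powersetCard k, ∏ j ∈ J, y j) * ∏ j ∈ Sᶜ, y j|
      ≤ (m + 1) * 2 ^ m * M ^ m * c ^ (k + 1) := by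
  have hdm : d ≤ m := hcard ▸ (Finset.card_le_univ S).trans_eq (Fintype.card_fin m)
  have hcompl : #Sᶜ = m - d := by rw [Finset.card_compl, Fintype.card_fin, hcard]
  set g := ∏ j ∈ S, (X + C (y j))
  set h := ∏ j ∈ Sᶜ, (X + C (y j))
  have hesymm : esymm y (m - d + k) = (g * h).coeff (d - k) := by
    rw [Finset.prod_mul_prod_compl, Finset.prod_X_add_C_coeff _ _ (by simp; omega)]
    simp only [esymm, Finset.card_univ, Fintype.card_fin]
    congr 2
    omega
  have hg : g.coeff (d - k) = ∑ J ∈ S.powersetCard k, ∏ j ∈ J, y j := by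
    rw [Finset.prod_X_add_C_coeff _ _ (by omega), hcard, Nat.sub_sub_self hk]
  have hh : h.coeff 0 = ∏ j ∈ Sᶜ, y j := by
    simp [h, coeff_zero_eq_eval_zero, eval_prod]
  have hterm : ∀ p ∈ (antidiagonal (d - k)).erase (d - k, 0),
      |g.coeff p.1 * h.coeff p.2| ≤ 2 ^ m * M ^ m * c ^ (k + 1) := by
    intro p hp
    have hp1 : p.1 + p.2 = d - k :=
      Finset.HasAntidiagonal.mem_antidiagonal.1 (Finset.mem_of_mem_erase hp)
    have hp2 : p.1 < d - k := by
      by_contra!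
      exact Finset.ne_of_mem_erase hp (Prod.ext (by omega) (by omega))
    have hgp : |g.coeff p.1| ≤ 2 ^ d * c ^ (k + 1) := by
      refine (Polynomial.abs_coeff_prod_X_add_C_le S y hc hz p.1).trans ?_
      rw [hcard]
      exact mul_le_mul_of_nonneg_left (pow_le_pow_of_le_one hc hc1 (by omega)) (by positivity)
    have hhp : |h.coeff p.2| ≤ 2 ^ (m - d) * M ^ m := by
      refine (Polynomial.abs_coeff_prod_X_add_C_le Sᶜ y (zero_le_one.trans hM) (fun j _ => hyM j)
        p.2).trans ?_
      rw [hcompl]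
      exact mul_le_mul_of_nonneg_left (pow_le_pow_right₀ hM (by omega)) (by positivity)
    rw [abs_mul]
    calc |g.coeff p.1| * |h.coeff p.2| ≤ (2 ^ d * c ^ (k + 1)) * (2 ^ (m - d) * M ^ m) :=
          mul_le_mul hgp hhp (abs_nonneg _) (by positivity)
      _ = 2 ^ m * M ^ m * c ^ (k + 1) := by
          rw [mul_mul_mul_comm, ← pow_add, Nat.add_sub_cancel' hdm]
          ring
  rw [hesymm, coeff_mul,
    ← Finset.add_sum_erase _ _ (by simp : (d - k, 0) ∈ antidiagonal (d - k)), hg, hh,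
    add_sub_cancel_left]
  calc _ ≤ ∑ p ∈ (antidiagonal (d - k)).erase (d - k, 0), |g.coeff p.1 * h.coeff p.2| :=
        Finset.abs_sum_le_sum_abs _ _
    _ ≤ #((antidiagonal (d - k)).erase (d - k, 0)) * (2 ^ m * M ^ m * c ^ (k + 1)) := by
        simpa using Finset.sum_le_sum hterm
    _ ≤ (m + 1) * (2 ^ m * M ^ m * c ^ (k + 1)) := by
        gcongr
        calc (#((antidiagonal (d - k)).erase (d - k, 0)) : ℝ) ≤ #(antidiagonal (d - k)) := by
              exact_mod_cast Finset.card_erase_le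
          _ ≤ m + 1 := by
              rw [Finset.Nat.card_antidiagonal]
              exact_mod_cast (by omega : d - k + 1 ≤ m + 1)
    _ = _ := by ring

theorem cone_of_esymm_neg (hd : 2 ≤ d) (hcard : #S = d) (hδ : 0 < δ) (hδ1 : δ ≤ 1)
    (hM : 1 ≤ M) (hη1 : η ≤ 1) (hw : ∀ j ∉ S, δ ≤ y j) (hz : ∀ j ∈ S, |y j| ≤ η)
    (hyM : ∀ j, |y j| ≤ M) (hsmall : 4 * ((m + 1) * 2 ^ m * M ^ m) * η ≤ δ ^ m)
    (hneg : esymm y (m - d + 1) < 0) (hnonneg : 0 ≤ esymm y (m - d + 2)) :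
    2 / 3 * √(∑ j ∈ S, y j ^ 2) ≤ -∑ j ∈ S, y j := by
  obtain ⟨j₁, hj₁, hmax⟩ := S.exists_max_image (|y ·|) (Finset.card_pos.1 (by omega))
  set c := |y j₁|
  have hc : 0 ≤ c := abs_nonneg _
  have hcη : c ≤ η := hz j₁ hj₁
  set W := ∏ j ∈ Sᶜ, y j
  have hW : δ ^ m ≤ W :=
    calc δ ^ m ≤ δ ^ #Sᶜ := pow_le_pow_of_le_one hδ.le hδ1 (Finset.card_le_univ _ |>.trans_eq
          (Fintype.card_fin m))
      _ = ∏ _j ∈ Sᶜ, δ := (Finset.prod_const _).symm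
      _ ≤ W := Finset.prod_le_prod (fun _ _ => hδ.le) fun j hj => hw j (Finset.mem_compl.1 hj)
  have hWpos : 0 < W := (pow_pos hδ m).trans_le hW
  -- Dividing the two expansions by `W ≥ δ ^ m` gives `σ₁(z) < c / 4` and `-c² / 4 ≤ σ₂(z)`.
  set K := (m + 1) * 2 ^ m * M ^ m
  have hKc : 4 * K * c ≤ W := by
    have : 0 ≤ K := by positivity
    nlinarith
  have h₁ : |esymm y (m - d + 1) - (∑ j ∈ S, y j) * W| ≤ K * c ^ 2 := by
    simpa [Finset.powersetCard_one] using
      abs_esymm_sub_le hcard (by omega : 1 ≤ d) hc (hcη.trans hη1) hmax hM hyM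
  have h₂ : |esymm y (m - d + 2) - (∑ J ∈ S.powersetCard 2, ∏ j ∈ J, y j) * W| ≤ K * c ^ 3 :=
    abs_esymm_sub_le hcard (by omega : 2 ≤ d) hc (hcη.trans hη1) hmax hM hyM
  have hKc₂ : 4 * K * c * c ≤ W * c := mul_le_mul_of_nonneg_right hKc hc
  have hKc₃ : 4 * K * c * c ^ 2 ≤ W * c ^ 2 := mul_le_mul_of_nonneg_right hKc (sq_nonneg c)
  have hσ₁ : (∑ j ∈ S, y j) < c / 4 := by
    refine lt_of_mul_lt_mul_right ?_ hWpos.le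
    linarith [(abs_le.1 h₁).1]
  have hσ₂ : -(c ^ 2 / 4) ≤ ∑ J ∈ S.powersetCard 2, ∏ j ∈ J, y j := by
    refine le_of_mul_le_mul_right ?_ hWpos
    linarith [(abs_le.1 h₂).2]
  have hsq := Multiset.sq_sum_eq_sum_sq_add_two_mul_esymm (S.val.map y)
  rw [Finset.esymm_map_val, Multiset.map_map] at hsq
  refine two_thirds_mul_sqrt_le_neg hc ?_ hsq hσ₁ hσ₂
  calc c ^ 2 = y j₁ ^ 2 := sq_abs _
    _ ≤ ∑ j ∈ S, y j ^ 2 := Finset.single_le_sum (fun j _ => sq_nonneg (y j)) hj₁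

theorem nonneg_of_esymm_nonneg (h : ∀ l ≤ m, 0 ≤ esymm y l) : 0 ≤ y := by
  intro j
  refine Multiset.nonneg_of_esymm_nonneg (s := univ.val.map y) (fun l hl => ?_) (y j)
    (Multiset.mem_map_of_mem _ (Finset.mem_univ j))
  rw [Finset.esymm_map_val]
  exact h l (by simpa using hl)

theorem nonneg_or_cone (hd : 2 ≤ d) (hdm : d ≤ m) (hcard : #S ≤ d) (hδ : 0 < δ) (hδ1 : δ ≤ 1)
    (hM : 1 ≤ M) (hη : 0 ≤ η) (hη1 : η ≤ 1) (hw : ∀ j ∉ S, δ ≤ y j) (hz : ∀ j ∈ S, |y j| ≤ η)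
    (hyM : ∀ j, |y j| ≤ M) (hsmall : 4 * ((m + 1) * 2 ^ m * M ^ m) * η ≤ δ ^ m)
    (hσ : ∀ i, m - d + 2 ≤ i → i ≤ m → 0 ≤ esymm y i) :
    0 ≤ y ∨ (#S = d ∧ 2 / 3 * √(∑ j ∈ S, y j ^ 2) ≤ -∑ j ∈ S, y j) := by
  have hlow : ∀ l ≤ m - #S, 0 ≤ esymm y l := by
    refine fun l hl => esymm_nonneg_of_le_card_compl hδ hδ1 hM hη hw hz hyM ?_ hl
    have : 2 ^ m * M ^ m ≤ 4 * ((m + 1) * 2 ^ m * M ^ m) := by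
      have : 0 ≤ (2 : ℝ) ^ m * M ^ m := by positivity
      nlinarith [(Nat.cast_nonneg m : (0 : ℝ) ≤ m)]
    nlinarith
  by_cases hall : ∀ l ≤ m, 0 ≤ esymm y l
  · exact Or.inl (nonneg_of_esymm_nonneg hall)
  push Not at hall
  obtain ⟨l, hlm, hl⟩ := hall
  have hSm : #S ≤ m := S.card_le_univ.trans_eq (Fintype.card_fin m)
  have hl₁ : m - #S < l := by
    by_contra!
    exact hl.not_ge (hlow l this)
  have hl₂ : l < m - d + 2 := by
    by_contra!
    exact hl.not_ge (hσ l this hlm)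
  have hSd : #S = d := by omega
  obtain rfl : l = m - d + 1 := by omega
  exact Or.inr ⟨hSd, cone_of_esymm_neg hd hSd hδ hδ1 hM hη1 hw hz hyM hsmall hl
    (hσ _ le_rfl (by omega))⟩

end Perturbation

theorem eventually_nonneg_or_cone {m d : ℕ} (hd : 2 ≤ d) (hdm : d ≤ m) {y₀ : Fin m → ℝ}
    (hy₀ : 0 ≤ y₀) {S : Finset (Fin m)} (hS : ∀ j, j ∈ S ↔ y₀ j = 0) (hcard : #S ≤ d) :
    ∀ᶠ y in 𝓝 y₀, (∀ i, m - d + 2 ≤ i → i ≤ m → 0 ≤ esymm y i) →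
      0 ≤ y ∨ (#S = d ∧ 2 / 3 * √(∑ j ∈ S, y j ^ 2) ≤ -∑ j ∈ S, y j) := by
  obtain ⟨δ, ⟨hδ1, hδS⟩, hδ⟩ : ∃ δ, (δ ≤ 1 ∧ ∀ j ∉ S, 2 * δ ≤ y₀ j) ∧ 0 < δ := by
    refine (Filter.Eventually.and ?_ self_mem_nhdsWithin).exists (f := 𝓝[>] (0 : ℝ))
    refine nhdsWithin_le_nhds
      ((eventually_le_nhds one_pos).and (Filter.eventually_all.2 fun j => ?_))
    by_cases hj : j ∈ S
    · exact Filter.Eventually.of_forall fun _ h => absurd hj h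
    have hpos : 0 < y₀ j / 2 := half_pos ((hy₀ j).lt_of_ne (Ne.symm ((hS j).not.1 hj)))
    filter_upwards [eventually_le_nhds hpos] with δ hδ _
    linarith
  set M := ‖y₀‖ + 1
  have hM : 1 ≤ M := by simp [M]
  set K := (m + 1) * 2 ^ m * M ^ m
  have hK : 0 < K := by
    have := zero_lt_one.trans_le hM
    positivity
  set η := min 1 (δ ^ m / (4 * K))
  have hη : 0 < η := lt_min one_pos (by positivity)
  have hsmall : 4 * K * η ≤ δ ^ m := by
    rw [← le_div_iff₀' (by positivity)]
    exact min_le_right _ _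
  filter_upwards [Metric.ball_mem_nhds y₀ (lt_min hη hδ)] with y hy hσ
  have hclose : ∀ j, |y j - y₀ j| < min η δ := fun j =>
    (Real.dist_eq _ _ ▸ dist_le_pi_dist y y₀ j).trans_lt hy
  refine nonneg_or_cone hd hdm hcard hδ hδ1 hM hη.le (min_le_left _ _) (fun j hj => ?_)
    (fun j hj => ?_) (fun j => ?_) hsmall hσ
  · linarith [hδS j hj, (abs_lt.1 (hclose j)).1, min_le_right η δ]
  · simpa [(hS j).1 hj] using (hclose j).le.trans (min_le_left _ _)
  · calc |y j| ≤ ‖y‖ := norm_le_pi_norm y j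
      _ ≤ ‖y₀‖ + ‖y - y₀‖ := norm_le_insert' y y₀
      _ ≤ M := by
        have : ‖y - y₀‖ < 1 := by
          rw [← dist_eq_norm]
          exact (Metric.mem_ball.1 hy).trans_le ((min_le_left _ _).trans (min_le_left _ _))
        linarith

namespace FacetRep

variable {d m : ℕ} (R : FacetRep d m)

theorem mem_P_iff {x : E d} : x ∈ R.P ↔ 0 ≤ R.q x := by
  rw [R.rep]
  exact Iff.rfl

theorem q_nonneg {x : E d} (hx : x ∈ R.P) (j : Fin m) : 0 ≤ R.q x j :=
  R.mem_P_iff.1 hx j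

theorem continuous_q_s6 : Continuous R.q :=
  continuous_pi fun _ => (continuous_const.sub (continuous_const.inner continuous_id)).div_const _

theorem q_smul_add_smul {a b : ℝ} (hab : a + b = 1) (x z : E d) (j : Fin m) :
    R.q (a • x + b • z) j = a * R.q x j + b * R.q z j := by
  simp only [q, qf, inner_add_right, real_inner_smul_right]
  linear_combination (supp R.P (R.u j) / Metric.diam R.P) * hab.symm

theorem exists_vertex_act_subset {x₀ : E d} (hx₀ : x₀ ∈ R.P) :
    ∃ v ∈ vertices R.P, R.act x₀ ⊆ R.act v := by
  set F := R.P ∩ ⋂ j ∈ R.act x₀, {x | R.q x j = 0}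
  have hx₀F : x₀ ∈ F := ⟨hx₀, Set.mem_iInter₂.2 fun j hj => (Finset.mem_filter.1 hj).2⟩
  have hFcompact : IsCompact F := by
    refine R.compact.inter_right (isClosed_biInter fun j _ => ?_)
    exact isClosed_eq ((continuous_apply j).comp R.continuous_q_s6) continuous_const
  have hFextreme : IsExtreme ℝ R.P F := by
    refine ⟨fun x hx => hx.1, fun x hx z hz w hw ⟨a, b, ha, hb, hab, hxz⟩ =>
      ⟨hx, Set.mem_iInter₂.2 fun j hj => ?_⟩⟩
    show R.q x j = 0
    have hsum : a * R.q x j + b * R.q z j = 0 := by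
      rw [← R.q_smul_add_smul hab, hxz]
      exact Set.mem_iInter₂.1 hw.2 j hj
    nlinarith [R.q_nonneg hx j, R.q_nonneg hz j]
  obtain ⟨v, hv⟩ := hFcompact.extremePoints_nonempty ⟨x₀, hx₀F⟩
  exact ⟨v, hFextreme.extremePoints_subset_extremePoints hv,
    fun j hj => Finset.mem_filter.2 ⟨Finset.mem_univ j, Set.mem_iInter₂.1 hv.1.2 j hj⟩⟩

theorem exists_pos_forall_le_q (hD : 0 < Metric.diam R.P) : ∃ c, ∃ ρ > 0, ∀ j, ρ ≤ R.q c j := by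
  obtain ⟨c, hc⟩ := R.fulldim
  obtain ⟨r, hr, hball⟩ := Metric.isOpen_iff.1 isOpen_interior c hc
  refine ⟨c, r / 2 / Metric.diam R.P, by positivity, fun j => ?_⟩
  have hu : ‖R.u j‖ = 1 := (R.facet j).1
  have hmem : c + (r / 2) • R.u j ∈ R.P := interior_subset <| hball <| by
    rw [Metric.mem_ball, dist_eq_norm, add_sub_cancel_left, norm_smul, hu, mul_one,
      Real.norm_eq_abs, abs_of_pos (half_pos hr)]
    exact half_lt_self hr
  have h := R.q_nonneg hmem j
  simp only [q, qf, inner_add_right, real_inner_smul_right, real_inner_self_eq_norm_sq, hu, one_pow,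
    mul_one] at h ⊢
  rw [sub_div] at h ⊢
  rw [add_div] at h
  linarith

theorem exists_Peps_subset_cthickening {δ : ℝ} (hδ : 0 < δ) :
    ∃ ε > 0, R.Peps ε ⊆ cthickening δ R.P := by
  rcases (Metric.diam_nonneg (s := R.P)).eq_or_lt with hD | hD
  · -- `diam P = 0` makes every `q_F` vanish (division by zero), so `P` is the whole space.
    refine ⟨1, one_pos, fun x _ => self_subset_cthickening _ (R.mem_P_iff.2 fun j => ?_)⟩
    simp [q, qf, ← hD]
  obtain ⟨c, ρ, hρ, hc⟩ := R.exists_pos_forall_le_q hD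
  set ε := δ * ρ / Metric.diam R.P with hε_def
  have hε : 0 < ε := by positivity
  refine ⟨ε, hε, fun x hx => ?_⟩
  -- Moving `x ∈ P_ε` towards `c` by the fraction `t` lands in `P`, at distance `≤ (ε / ρ) diam P`.
  set t := ε / (ρ + ε) with ht_def
  have hρε : 0 < ρ + ε := by positivity
  have ht : 1 - t = ρ / (ρ + ε) := by rw [ht_def]; field_simp; ring
  have hmem : AffineMap.lineMap x c t ∈ R.P := by
    refine R.mem_P_iff.2 fun j => ?_
    rw [AffineMap.lineMap_apply_module, R.q_smul_add_smul (sub_add_cancel 1 t), ht]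
    have key : ρ / (ρ + ε) * (-ε) + t * ρ = 0 := by rw [ht_def]; field_simp; ring
    show 0 ≤ ρ / (ρ + ε) * R.q x j + t * R.q c j
    nlinarith [hx j, hc j, (by positivity : 0 ≤ ρ / (ρ + ε)), (by positivity : 0 ≤ t)]
  have hcP : c ∈ R.P := R.mem_P_iff.2 fun j => hρ.le.trans (hc j)
  have hdiam := Metric.dist_le_diam_of_mem R.compact.isBounded hmem hcP
  rw [dist_lineMap_right, Real.norm_of_nonneg (by rw [ht]; positivity), ht] at hdiam
  refine mem_cthickening_of_dist_le x _ δ _ hmem ?_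
  rw [dist_left_lineMap, Real.norm_of_nonneg (by positivity)]
  calc t * dist x c = ε / ρ * (ρ / (ρ + ε) * dist x c) := by rw [ht_def]; field_simp
    _ ≤ ε / ρ * Metric.diam R.P := by gcongr
    _ = δ := by rw [hε_def]; field_simp

theorem eventually_mem_P_or_Cv (hd : 2 ≤ d) (hs : R.Simple) {x₀ : E d} (hx₀ : x₀ ∈ R.P) :
    ∀ᶠ x in 𝓝 x₀, (∀ i, m - d + 2 ≤ i → i ≤ m → 0 ≤ esymm (R.q x) i) →
      x ∈ R.P ∪ ⋃ v ∈ vertices R.P, R.Cv v := by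
  obtain ⟨v, hv, hsub⟩ := R.exists_vertex_act_subset hx₀
  have hdm : d ≤ m :=
    (hs v hv).symm.trans_le ((R.act v).card_le_univ.trans_eq (Fintype.card_fin m))
  have hS : ∀ j, j ∈ R.act x₀ ↔ R.q x₀ j = 0 := by simp [act]
  have hcard : #(R.act x₀) ≤ d := (Finset.card_le_card hsub).trans_eq (hs v hv)
  filter_upwards [R.continuous_q_s6.continuousAt.eventually
    (eventually_nonneg_or_cone hd hdm (R.mem_P_iff.1 hx₀) hS hcard)] with x hx hσ
  rcases hx hσ with hnonneg | ⟨hcard_eq, hcone⟩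
  · exact Or.inl (R.mem_P_iff.2 hnonneg)
  · have hact : R.act x₀ = R.act v :=
      Finset.eq_of_subset_of_card_le hsub (by rw [hs v hv, hcard_eq])
    exact Or.inr (Set.mem_biUnion hv (by rw [hact] at hcone; exact hcone))

end FacetRep

theorem statement6 (d m : ℕ) (hd : 2 ≤ d) (R : FacetRep d m) (hs : R.Simple) :
    ∃ ε₃ > (0 : ℝ),
      {x ∈ R.Peps ε₃ | ∀ i, m - d + 2 ≤ i → i ≤ m → 0 ≤ esymm (R.q x) i}
        ⊆ R.P ∪ ⋃ v ∈ vertices R.P, R.Cv v := by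
  set G := {x | (∀ i, m - d + 2 ≤ i → i ≤ m → 0 ≤ esymm (R.q x) i) →
    x ∈ R.P ∪ ⋃ v ∈ vertices R.P, R.Cv v}
  have hPG : R.P ⊆ interior G := fun x hx =>
    mem_interior_iff_mem_nhds.2 (R.eventually_mem_P_or_Cv hd hs hx)
  obtain ⟨δ, hδ, hδG⟩ := R.compact.exists_cthickening_subset_open isOpen_interior hPG
  obtain ⟨ε, hε, hεδ⟩ := R.exists_Peps_subset_cthickening hδ
  exact ⟨ε, hε, fun x ⟨hx, hσ⟩ => interior_subset (hδG (hεδ hx)) hσ⟩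

end AverkovHenk
end
end
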